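/- arXiv:2504.15412 — 5 statements merged into one kernel-verified Lean document; each statement's English description precedes it below -/
import Mathlib

section
/- Let B: X → ℝ be a barrier certificate for a discrete-time stochastic system, i.e., B(x) ≥ 0 for all x ∈ X, B(x) ≤ γ for all x ∈ X₀, B(x) ≥ 1 for all x ∈ X_u, and E[B(f(x,w))] ≤ B(x) for all x ∈ X \ X_u, where 0 ≤ γ ≤ 1. Then for every initial state x₀ ∈ X₀, the probability that the solution process starting at x₀ never enters X_u is at least 1 − γ. -/
open MeasureTheory
open scoped ENNReal

/-!
Let `E t` be the event `x t ∈ Xu`. Until the first visit to `Xu`, `B (x t)` is a nonnegative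
supermartingale, so `∫⁻_{no visit up to t} B (x t) + μ (visit up to t)` never increases in `t`.
It starts at `B x0 ≤ γ`, and as `B ≥ 1` on `Xu`, the probability of ever visiting `Xu` is at
most `γ`. The supermartingale step is carried out in `ℝ≥0∞`: the Markov property, assumed only
for bounded observables, extends to every measurable `g : X → ℝ≥0∞` by the monotone class
argument (indicators, sums, increasing suprema).
-/

section Hitting

variable {Ω : Type*} {m : MeasurableSpace Ω} {μ : Measure Ω} {E : ℕ → Set Ω}
  {V : ℕ → Ω → ℝ≥0∞}

theorem measure_le_setLIntegral_of_one_le {s : Set Ω} (hs : MeasurableSet s) {φ : Ω → ℝ≥0∞}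
    (hφ : ∀ ω ∈ s, 1 ≤ φ ω) : μ s ≤ ∫⁻ ω in s, φ ω ∂μ :=
  setLIntegral_one s ▸ setLIntegral_mono' hs hφ

theorem setLIntegral_compl_accumulate_add_measure_le (hE : ∀ t, MeasurableSet (E t))
    (hV : ∀ t, ∀ ω ∈ E t, 1 ≤ V t ω)
    (hstep : ∀ t, ∫⁻ ω in (Set.accumulate E t)ᶜ, V (t + 1) ω ∂μ ≤
      ∫⁻ ω in (Set.accumulate E t)ᶜ, V t ω ∂μ) (T : ℕ) :
    ∫⁻ ω in (Set.accumulate E T)ᶜ, V T ω ∂μ + μ (Set.accumulate E T) ≤ ∫⁻ ω, V 0 ω ∂μ := by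
  induction T with
  | zero =>
    rw [Set.accumulate_zero_nat, add_comm]
    calc μ (E 0) + ∫⁻ ω in (E 0)ᶜ, V 0 ω ∂μ
        ≤ ∫⁻ ω in E 0, V 0 ω ∂μ + ∫⁻ ω in (E 0)ᶜ, V 0 ω ∂μ :=
          add_le_add (measure_le_setLIntegral_of_one_le (hE 0) (hV 0)) le_rfl
      _ = ∫⁻ ω, V 0 ω ∂μ := lintegral_add_compl _ (hE 0)
  | succ T ih =>
    set H := Set.accumulate E T
    have hH : MeasurableSet H :=
      MeasurableSet.iUnion fun _ => MeasurableSet.iUnion fun _ => hE _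
    have hnew : μ (E (T + 1) \ H) ≤ ∫⁻ ω in Hᶜ ∩ E (T + 1), V (T + 1) ω ∂μ := by
      rw [← Set.sdiff_eq_compl_inter]
      exact measure_le_setLIntegral_of_one_le ((hE _).diff hH) fun ω hω => hV _ ω hω.1
    calc ∫⁻ ω in (Set.accumulate E (T + 1))ᶜ, V (T + 1) ω ∂μ + μ (Set.accumulate E (T + 1))
        ≤ ∫⁻ ω in Hᶜ \ E (T + 1), V (T + 1) ω ∂μ
            + (∫⁻ ω in Hᶜ ∩ E (T + 1), V (T + 1) ω ∂μ + μ H) := by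
          rw [Set.accumulate_succ, Set.compl_union, ← Set.sdiff_eq, ← Set.union_sdiff_self]
          gcongr
          exact ((measure_union_le _ _).trans_eq (add_comm _ _)).trans (add_le_add hnew le_rfl)
      _ = ∫⁻ ω in Hᶜ, V (T + 1) ω ∂μ + μ H := by
          rw [← add_assoc, add_comm (∫⁻ ω in Hᶜ \ E (T + 1), _ ∂μ),
            lintegral_inter_add_sdiff _ _ (hE _)]
      _ ≤ ∫⁻ ω in Hᶜ, V T ω ∂μ + μ H := add_le_add (hstep T) le_rfl
      _ ≤ ∫⁻ ω, V 0 ω ∂μ := ih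

theorem measure_iUnion_le_lintegral_of_setLIntegral_succ_le (hE : ∀ t, MeasurableSet (E t))
    (hV : ∀ t, ∀ ω ∈ E t, 1 ≤ V t ω)
    (hstep : ∀ t, ∫⁻ ω in (Set.accumulate E t)ᶜ, V (t + 1) ω ∂μ ≤
      ∫⁻ ω in (Set.accumulate E t)ᶜ, V t ω ∂μ) :
    μ (⋃ t, E t) ≤ ∫⁻ ω, V 0 ω ∂μ := by
  rw [← Set.iUnion_accumulate, Set.monotone_accumulate.measure_iUnion]
  exact iSup_le fun T =>
    le_add_self.trans (setLIntegral_compl_accumulate_add_measure_le hE hV hstep T)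

end Hitting

def HasMarkovTransition {Ω X W : Type*} {m : MeasurableSpace Ω} [MeasurableSpace X]
    [MeasurableSpace W] (μ : Measure Ω) (ℱ : Filtration ℕ m) (x : ℕ → Ω → X)
    (f : X → W → X) (μW : Measure W) : Prop :=
  ∀ (t : ℕ) (g : X → ℝ), Measurable g → (∃ C, ∀ y, |g y| ≤ C) →
    μ[(fun ω => g (x (t + 1) ω))|ℱ t] =ᵐ[μ] fun ω => ∫ w, g (f (x t ω) w) ∂μW

theorem measurable_lintegral_comp {X W Y : Type*} [MeasurableSpace X] [MeasurableSpace W]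
    [MeasurableSpace Y] {μW : Measure W} [SFinite μW] {f : X → W → Y}
    (hf : Measurable (Function.uncurry f)) {g : Y → ℝ≥0∞} (hg : Measurable g) : Measurable fun y => ∫⁻ w, g (f y w) ∂μW :=
  (hg.comp hf).lintegral_prod_right'

theorem measurable_measure_preimage {X W Y : Type*} [MeasurableSpace X] [MeasurableSpace W]
    [MeasurableSpace Y] {μW : Measure W} [SFinite μW] {f : X → W → Y}
    (hf : Measurable (Function.uncurry f)) {s : Set Y} (hs : MeasurableSet s) :
    Measurable fun y => μW (f y ⁻¹' s) :=
  measurable_measure_prodMk_left (hf hs)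

namespace HasMarkovTransition

variable {Ω X W : Type*} {m : MeasurableSpace Ω} [MeasurableSpace X] [MeasurableSpace W]
  {μ : Measure Ω} [IsFiniteMeasure μ] {μW : Measure W} [IsFiniteMeasure μW]
  {ℱ : Filtration ℕ m} {x : ℕ → Ω → X} {f : X → W → X}

theorem measure_inter_preimage_succ (h : HasMarkovTransition μ ℱ x f μW)
    (hadapted : ∀ t, Measurable[ℱ t] (x t)) (hf : Measurable (Function.uncurry f))
    {t : ℕ} {A : Set Ω} (hA : MeasurableSet[ℱ t] A) {s : Set X} (hs : MeasurableSet s) :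
    μ (A ∩ x (t + 1) ⁻¹' s) = ∫⁻ ω in A, μW (f (x t ω) ⁻¹' s) ∂μ := by
  have hx : ∀ t, Measurable (x t) := fun t => (hadapted t).mono (ℱ.le t) le_rfl
  have hfs : ∀ y, MeasurableSet (f y ⁻¹' s) := fun y => hf.of_uncurry_left hs
  have hmarkov := h t (s.indicator 1) (measurable_one.indicator hs)
    ⟨1, fun y => by by_cases hy : y ∈ s <;> simp [hy]⟩
  have hreal : μ.real (A ∩ x (t + 1) ⁻¹' s) = ∫ ω in A, μW.real (f (x t ω) ⁻¹' s) ∂μ := by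
    calc μ.real (A ∩ x (t + 1) ⁻¹' s)
        = ∫ ω in A, s.indicator 1 (x (t + 1) ω) ∂μ := by
          rw [Set.inter_comm, ← measureReal_restrict_apply ((hx _) hs),
            ← integral_indicator_one ((hx _) hs)]
          rfl
      _ = ∫ ω in A, μ[fun ω => s.indicator 1 (x (t + 1) ω)|ℱ t] ω ∂μ :=
          (setIntegral_condExp (ℱ.le t)
            ((integrable_const (1 : ℝ)).indicator ((hx _) hs)) hA).symm
      _ = ∫ ω in A, μW.real (f (x t ω) ⁻¹' s) ∂μ := by
          refine setIntegral_congr_ae (ℱ.le t _ hA) ?_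
          filter_upwards [hmarkov] with ω hω _
          rw [hω, ← integral_indicator_one (hfs _)]
          rfl
  have hmeas : Measurable fun ω => μW (f (x t ω) ⁻¹' s) :=
    (measurable_measure_preimage hf hs).fun_comp (hx t)
  simp only [Measure.real] at hreal
  rw [integral_toReal hmeas.aemeasurable (ae_of_all _ fun _ => measure_lt_top _ _)] at hreal
  refine (ENNReal.toReal_eq_toReal_iff' (measure_ne_top _ _) ?_).mp hreal
  refine ne_top_of_le_ne_top (b := ∫⁻ _ in A, μW Set.univ ∂μ) ?_
    (lintegral_mono fun _ => measure_mono (Set.subset_univ _))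
  rw [setLIntegral_const]
  exact ENNReal.mul_ne_top (measure_ne_top _ _) (measure_ne_top _ _)

theorem setLIntegral_comp_succ (h : HasMarkovTransition μ ℱ x f μW)
    (hadapted : ∀ t, Measurable[ℱ t] (x t)) (hf : Measurable (Function.uncurry f))
    {t : ℕ} {A : Set Ω} (hA : MeasurableSet[ℱ t] A) {g : X → ℝ≥0∞} (hg : Measurable g) :
    ∫⁻ ω in A, g (x (t + 1) ω) ∂μ = ∫⁻ ω in A, ∫⁻ w, g (f (x t ω) w) ∂μW ∂μ := by
  have hx : ∀ t, Measurable (x t) := fun t => (hadapted t).mono (ℱ.le t) le_rfl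
  have hcomp : ∀ {g : X → ℝ≥0∞}, Measurable g → Measurable fun ω => g (x (t + 1) ω) :=
    fun hg => hg.comp (hx _)
  have hinner : ∀ {g : X → ℝ≥0∞}, Measurable g →
      Measurable fun ω => ∫⁻ w, g (f (x t ω) w) ∂μW :=
    fun hg => (measurable_lintegral_comp hf hg).fun_comp (hx t)
  refine hg.ennreal_induction (motive := fun g =>
    ∫⁻ ω in A, g (x (t + 1) ω) ∂μ = ∫⁻ ω in A, ∫⁻ w, g (f (x t ω) w) ∂μW ∂μ) ?_ ?_ ?_
  · intro c s hs
    have hpre₁ : ∀ ω, s.indicator (fun _ => c) (x (t + 1) ω) =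
        (x (t + 1) ⁻¹' s).indicator (fun _ => c) ω := fun _ => rfl
    have hpre₂ : ∀ y w, s.indicator (fun _ => c) (f y w) =
        (f y ⁻¹' s).indicator (fun _ => c) w := fun _ _ => rfl
    simp only [hpre₁, hpre₂]
    rw [lintegral_indicator_const ((hx _) hs), Measure.restrict_apply ((hx _) hs), Set.inter_comm,
      h.measure_inter_preimage_succ hadapted hf hA hs]
    simp only [lintegral_indicator_const (hf.of_uncurry_left hs)]
    rw [lintegral_const_mul c (f := fun ω => μW (f (x t ω) ⁻¹' s))
      ((measurable_measure_preimage hf hs).fun_comp (hx t))]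
  · intro g₁ g₂ _ hg₁ hg₂ ih₁ ih₂
    simp only [Pi.add_apply]
    rw [lintegral_add_left (hcomp hg₁), ih₁, ih₂, ← lintegral_add_left (hinner hg₁)]
    congr 1
    funext ω
    exact (lintegral_add_left (hg₁.comp hf.of_uncurry_left) _).symm
  · intro g hg hmono ih
    have hmono₁ : Monotone fun n ω => g n (x (t + 1) ω) := fun _ _ hab _ => hmono hab _
    have hmono₂ : ∀ y, Monotone fun n w => g n (f y w) := fun _ _ _ hab _ => hmono hab _
    rw [lintegral_iSup (fun n => hcomp (hg n)) hmono₁]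
    simp_rw [ih]
    rw [← lintegral_iSup (fun n => hinner (hg n))
      fun _ _ hab ω => lintegral_mono fun w => hmono hab _]
    congr 1
    funext ω
    exact (lintegral_iSup (fun n => (hg n).comp hf.of_uncurry_left) (hmono₂ _)).symm

theorem ae_integrable_comp (h : HasMarkovTransition μ ℱ x f μW)
    (hadapted : ∀ t, Measurable[ℱ t] (x t)) (hf : Measurable (Function.uncurry f))
    {t : ℕ} {g : X → ℝ} (hg : Measurable g) (hint : Integrable (fun ω => g (x (t + 1) ω)) μ) :
    ∀ᵐ ω ∂μ, Integrable (fun w => g (f (x t ω) w)) μW := by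
  have hx : Measurable (x t) := (hadapted t).mono (ℱ.le t) le_rfl
  have hlint := h.setLIntegral_comp_succ hadapted hf (t := t) MeasurableSet.univ hg.enorm
  simp only [Measure.restrict_univ] at hlint
  filter_upwards [ae_lt_top ((measurable_lintegral_comp hf hg.enorm).fun_comp hx)
    (hlint ▸ hint.hasFiniteIntegral.ne)] with ω hω
  exact ⟨(hg.comp hf.of_uncurry_left).aestronglyMeasurable, hω⟩

theorem ae_ae_mem_of_forall_mem (h : HasMarkovTransition μ ℱ x f μW)
    (hadapted : ∀ t, Measurable[ℱ t] (x t)) (hf : Measurable (Function.uncurry f))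
    {t : ℕ} {s : Set X} (hs : MeasurableSet s) (hmem : ∀ ω, x (t + 1) ω ∈ s) :
    ∀ᵐ ω ∂μ, ∀ᵐ w ∂μW, f (x t ω) w ∈ s := by
  have hx : Measurable (x t) := (hadapted t).mono (ℱ.le t) le_rfl
  have hzero := h.measure_inter_preimage_succ hadapted hf (t := t) MeasurableSet.univ hs.compl
  rw [Set.univ_inter, Set.preimage_eq_empty (Set.disjoint_compl_left_iff_subset.mpr
    (fun _ ⟨ω, hω⟩ => hω ▸ hmem ω)), measure_empty, Measure.restrict_univ, eq_comm,
    lintegral_eq_zero_iff ((measurable_measure_preimage hf hs.compl).fun_comp hx)] at hzero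
  filter_upwards [hzero] with ω hω
  exact ae_iff.mpr hω

theorem setLIntegral_ofReal_succ_le (h : HasMarkovTransition μ ℱ x f μW)
    (hadapted : ∀ t, Measurable[ℱ t] (x t)) (hf : Measurable (Function.uncurry f))
    {B : X → ℝ} (hB : Measurable B) {t : ℕ} (hB0 : ∀ ω, 0 ≤ B (x (t + 1) ω))
    (hint : Integrable (fun ω => B (x (t + 1) ω)) μ) {A : Set Ω} (hA : MeasurableSet[ℱ t] A)
    (hstep : ∀ ω ∈ A, ∫ w, B (f (x t ω) w) ∂μW ≤ B (x t ω)) :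
    ∫⁻ ω in A, ENNReal.ofReal (B (x (t + 1) ω)) ∂μ ≤ ∫⁻ ω in A, ENNReal.ofReal (B (x t ω)) ∂μ := by
  have hx : Measurable (x t) := (hadapted t).mono (ℱ.le t) le_rfl
  rw [h.setLIntegral_comp_succ hadapted hf hA hB.ennreal_ofReal]
  refine setLIntegral_mono_ae (hB.ennreal_ofReal.comp hx).aemeasurable ?_
  -- `hstep` bounds a Bochner integral, which is only meaningful where `B ∘ f (x t ω)` is
  -- integrable and a.e. nonnegative; both hold for a.e. `ω`.
  filter_upwards [h.ae_integrable_comp hadapted hf hB hint,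
    h.ae_ae_mem_of_forall_mem hadapted hf (measurableSet_le measurable_const hB) hB0]
    with ω hωint hωnonneg hωA
  rw [← ofReal_integral_eq_lintegral_ofReal hωint hωnonneg]
  exact ENNReal.ofReal_le_ofReal (hstep ω hωA)

end HasMarkovTransition

theorem stmt_1_general {Ω : Type*} {m : MeasurableSpace Ω} (μ : Measure Ω) [IsProbabilityMeasure μ]
    {X : Type*} [MeasurableSpace X] {W : Type*} [MeasurableSpace W]
    (μW : Measure W) [IsProbabilityMeasure μW]
    (Xs X0 Xu : Set X) (hXu : MeasurableSet Xu)
    (f : X → W → X) (hf : Measurable (Function.uncurry f))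
    (B : X → ℝ) (hBmeas : Measurable B)
    (γ : ℝ) (hγ0 : 0 ≤ γ)
    -- barrier certificate conditions
    (hB0 : ∀ x ∈ Xs, 0 ≤ B x)
    (hBinit : ∀ x ∈ X0, B x ≤ γ)
    (hBunsafe : ∀ x ∈ Xu, 1 ≤ B x)
    (hBstep : ∀ x ∈ Xs \ Xu, ∫ w, B (f x w) ∂μW ≤ B x)
    -- the solution process starting from x0 ∈ X0
    (x0 : X) (hx0 : x0 ∈ X0)
    (x : ℕ → Ω → X) (ℱ : Filtration ℕ m)
    (hadapted : ∀ t, Measurable[ℱ t] (x t))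
    (hinit : ∀ ω, x 0 ω = x0)
    (hinv : ∀ t ω, x t ω ∈ Xs)
    (hintB : ∀ t, Integrable (fun ω => B (x t ω)) μ)
    (hMarkov : ∀ (t : ℕ) (g : X → ℝ), Measurable g → (∃ C, ∀ y, |g y| ≤ C) →
      μ[(fun ω => g (x (t + 1) ω))|ℱ t] =ᵐ[μ]
        fun ω => ∫ w, g (f (x t ω) w) ∂μW) :
    ENNReal.ofReal (1 - γ) ≤ μ {ω | ∀ t, x t ω ∉ Xu} := by
  set E : ℕ → Set Ω := fun t => x t ⁻¹' Xu
  have hE : ∀ t, MeasurableSet[ℱ t] (E t) := fun t => hadapted t hXu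
  have hsafe : ∀ t, MeasurableSet[ℱ t] (Set.accumulate E t)ᶜ := fun t =>
    (MeasurableSet.iUnion fun s => MeasurableSet.iUnion fun hst => ℱ.mono hst _ (hE s)).compl
  have hunsafe : μ (⋃ t, E t) ≤ ENNReal.ofReal γ :=
    calc μ (⋃ t, E t)
        ≤ ∫⁻ ω, ENNReal.ofReal (B (x 0 ω)) ∂μ :=
          measure_iUnion_le_lintegral_of_setLIntegral_succ_le (fun t => ℱ.le t _ (hE t))
            (fun _ _ hω => ENNReal.one_le_ofReal.mpr (hBunsafe _ hω)) fun t =>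
            HasMarkovTransition.setLIntegral_ofReal_succ_le hMarkov hadapted hf hBmeas
              (fun ω => hB0 _ (hinv _ ω)) (hintB _) (hsafe t) fun ω hω =>
              hBstep _ ⟨hinv t ω, fun hu => hω (Set.subset_accumulate (s := E) hu)⟩
      _ = ENNReal.ofReal (B x0) := by simp [hinit]
      _ ≤ ENNReal.ofReal γ := ENNReal.ofReal_le_ofReal (hBinit x0 hx0)
  have hcompl : {ω | ∀ t, x t ω ∉ Xu} = (⋃ t, E t)ᶜ := by ext; simp [E]
  rw [hcompl, prob_compl_eq_one_sub (MeasurableSet.iUnion fun t => ℱ.le t _ (hE t)),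
    ENNReal.ofReal_sub _ hγ0, ENNReal.ofReal_one]
  exact tsub_le_tsub_left hunsafe 1

/-- Standard barrier certificates imply a `1 - γ` lower bound on the safety probability
(Theorem 2.5 / `prajna2007framework`).  The solution process `x` of the discrete-time
stochastic system `x(t+1) = f(x(t), w(t))` with i.i.d. noise of law `μW` is encoded via
its Markov property w.r.t. a filtration `ℱ`. -/
theorem stmt_1 {Ω : Type*} {m : MeasurableSpace Ω} (μ : Measure Ω) [IsProbabilityMeasure μ]
    {X : Type*} [MeasurableSpace X] {W : Type*} [MeasurableSpace W]
    (μW : Measure W) [IsProbabilityMeasure μW]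
    (Xs X0 Xu : Set X) (hX0sub : X0 ⊆ Xs) (hXusub : Xu ⊆ Xs) (hXu : MeasurableSet Xu)
    (f : X → W → X) (hf : Measurable (Function.uncurry f))
    (B : X → ℝ) (hBmeas : Measurable B)
    (γ : ℝ) (hγ0 : 0 ≤ γ) (hγ1 : γ ≤ 1)
    -- barrier certificate conditions
    (hB0 : ∀ x ∈ Xs, 0 ≤ B x)
    (hBinit : ∀ x ∈ X0, B x ≤ γ)
    (hBunsafe : ∀ x ∈ Xu, 1 ≤ B x)
    (hBstep : ∀ x ∈ Xs \ Xu, ∫ w, B (f x w) ∂μW ≤ B x)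
    -- the solution process starting from x0 ∈ X0
    (x0 : X) (hx0 : x0 ∈ X0)
    (x : ℕ → Ω → X) (ℱ : Filtration ℕ m)
    (hadapted : ∀ t, Measurable[ℱ t] (x t))
    (hmeasx : ∀ t, Measurable (x t))
    (hinit : ∀ ω, x 0 ω = x0)
    (hinv : ∀ t ω, x t ω ∈ Xs)
    (hintB : ∀ t, Integrable (fun ω => B (x t ω)) μ)
    (hMarkov : ∀ (t : ℕ) (g : X → ℝ), Measurable g → (∃ C, ∀ y, |g y| ≤ C) →
      μ[(fun ω => g (x (t + 1) ω))|ℱ t] =ᵐ[μ]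
        fun ω => ∫ w, g (f (x t ω) w) ∂μW) :
    ENNReal.ofReal (1 - γ) ≤ μ {ω | ∀ t, x t ω ∉ Xu} :=
  stmt_1_general μ μW Xs X0 Xu hXu f hf B hBmeas γ hγ0 hB0 hBinit hBunsafe hBstep x0 hx0 x ℱ
    hadapted hinit hinv hintB hMarkov
end

section
/- Let B₀, ..., B_{k−1}: X → ℝ be a (multi-function) k-inductive barrier certificate for a discrete-time stochastic system S, i.e., there exist k ∈ ℕ_{≥1} and λ_i > 0 (0 ≤ i < k) such that: B_i(x) ≥ 0 for all x ∈ X; B₀(x) ≤ λ₀ for all x ∈ X₀; B_i(x) ≥ 1 for all x ∈ X_u; E[B_i(f^i(x₀, w_i)) | x₀] ≤ λ_i for all x₀ ∈ X₀ and 1 ≤ i < k; and E[B_i(f^k(x, w_k)) | x] ≤ B_i(x) for all x ∈ X \ X_u and 0 ≤ i < k. Then for every x₀ ∈ X₀, P{x_{x₀}(t) ∉ X_u for all t ∈ ℕ} ≥ 1 − ∑_{i=0}^{k−1} λ_i. -/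
/-!
Fix a residue `i < k` and follow the subsampled process `x (i + j k)`, `j ∈ ℕ`. Until it first
enters `Xu` it lives in `Xs \ Xu`, where `B i` decreases in expectation over `k` steps, so
`B i` evaluated along this process and stopped at the first visit to `Xu` is a nonnegative
supermartingale. Since `B i ≥ 1` on `Xu`, Ville's inequality bounds the probability of ever
visiting `Xu` at times `≡ i (mod k)` by `E[B i (x i)] ≤ λ_i`; a union bound over the `k`
residues finishes the proof.

The Markov hypothesis is only stated for bounded test functions; applied to indicators it
determines the conditional law of `x (t + n)` given `ℱ t`, and that law is then integrated against
the unbounded `B i` as a lower Lebesgue integral.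
-/

open MeasureTheory

/-- `iterNoise f n x w` is the `n`-fold composition `f^n(x, w)` of the transition map `f`,
fed with the noise vector `w = (w 0, …, w (n-1))`. -/
def iterNoise {X W : Type*} (f : X → W → X) : (n : ℕ) → X → (Fin n → W) → X
  | 0, x, _ => x
  | n + 1, x, w => f (iterNoise f n x fun i => w i.castSucc) (w (Fin.last n))

open Set
open scoped ENNReal

theorem iUnion_subset_biUnion_range_add_mul {α : Type*} {k : ℕ} (hk : 0 < k) (s : ℕ → Set α) :
    ⋃ t, s t ⊆ ⋃ i ∈ Finset.range k, ⋃ j, s (i + j * k) := by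
  refine iUnion_subset fun t => ?_
  rw [← Nat.mod_add_div' t k]
  exact (subset_iUnion (fun j => s (t % k + j * k)) (t / k)).trans
    (subset_biUnion_of_mem (u := fun i => ⋃ j, s (i + j * k))
      (Finset.mem_coe.mpr (Finset.mem_range.mpr (Nat.mod_lt t hk))))

theorem ofReal_one_sub_sum_le_measure {Ω ι : Type*} [MeasurableSpace Ω] {μ : Measure Ω}
    [IsProbabilityMeasure μ] {s : Set Ω} {I : Finset ι} {a : ι → ℝ} (ha : ∀ i ∈ I, 0 ≤ a i)
    (hs : μ sᶜ ≤ ∑ i ∈ I, ENNReal.ofReal (a i)) :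
    ENNReal.ofReal (1 - ∑ i ∈ I, a i) ≤ μ s := by
  rw [ENNReal.ofReal_sub _ (Finset.sum_nonneg ha), ENNReal.ofReal_one,
    ENNReal.ofReal_sum_of_nonneg ha, tsub_le_iff_right]
  calc 1 = μ (s ∪ sᶜ) := by rw [union_compl_self, measure_univ]
    _ ≤ μ s + μ sᶜ := measure_union_le _ _
    _ ≤ μ s + ∑ i ∈ I, ENNReal.ofReal (a i) := by gcongr

section Ville

variable {Ω : Type*} [MeasurableSpace Ω] {μ : Measure Ω} {E : ℕ → Set Ω} {Z : ℕ → Ω → ℝ≥0∞}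

theorem measure_accumulate_add_setLIntegral_le (hE : ∀ j, MeasurableSet (E j))
    (hZE : ∀ j, ∀ ω ∈ E j, 1 ≤ Z j ω)
    (hstep : ∀ j, ∫⁻ ω in (accumulate E j)ᶜ, Z (j + 1) ω ∂μ ≤
      ∫⁻ ω in (accumulate E j)ᶜ, Z j ω ∂μ) (n : ℕ) :
    μ (accumulate E n) + ∫⁻ ω in (accumulate E n)ᶜ, Z n ω ∂μ ≤ ∫⁻ ω, Z 0 ω ∂μ := by
  have measure_le (j : ℕ) {s : Set Ω} (hs : MeasurableSet s) (hsE : s ⊆ E j) :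
      μ s ≤ ∫⁻ ω in s, Z j ω ∂μ := by
    rw [← setLIntegral_one]
    exact setLIntegral_mono' hs fun ω hω => hZE j ω (hsE hω)
  induction n with
  | zero =>
    rw [accumulate_zero_nat]
    exact (add_le_add_left (measure_le 0 (hE 0) subset_rfl) _).trans_eq
      (lintegral_add_compl _ (hE 0))
  | succ n ih =>
    set A := accumulate E n
    have hA : MeasurableSet A := .biUnion (to_countable _) fun j _ => hE j
    have hsucc : accumulate E (n + 1) = A ∪ (Aᶜ ∩ E (n + 1)) := by
      rw [accumulate_succ, union_inter_distrib_left, union_compl_self, univ_inter]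
    have hsucc_compl : (accumulate E (n + 1))ᶜ = Aᶜ \ E (n + 1) := by
      rw [accumulate_succ, compl_union]; rfl
    calc μ (accumulate E (n + 1)) + ∫⁻ ω in (accumulate E (n + 1))ᶜ, Z (n + 1) ω ∂μ
        ≤ μ A + μ (Aᶜ ∩ E (n + 1)) + ∫⁻ ω in Aᶜ \ E (n + 1), Z (n + 1) ω ∂μ := by
          rw [hsucc_compl, hsucc]
          exact add_le_add_left (measure_union_le _ _) _
      _ ≤ μ A + (∫⁻ ω in Aᶜ ∩ E (n + 1), Z (n + 1) ω ∂μ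
            + ∫⁻ ω in Aᶜ \ E (n + 1), Z (n + 1) ω ∂μ) := by
          rw [← add_assoc]
          gcongr
          exact measure_le _ (hA.compl.inter (hE _)) inter_subset_right
      _ = μ A + ∫⁻ ω in Aᶜ, Z (n + 1) ω ∂μ := by rw [lintegral_inter_add_sdiff _ _ (hE _)]
      _ ≤ μ A + ∫⁻ ω in Aᶜ, Z n ω ∂μ := add_le_add_right (hstep n) _
      _ ≤ ∫⁻ ω, Z 0 ω ∂μ := ih

theorem measure_iUnion_le_lintegral_of_setLIntegral_le (hE : ∀ j, MeasurableSet (E j))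
    (hZE : ∀ j, ∀ ω ∈ E j, 1 ≤ Z j ω)
    (hstep : ∀ j, ∫⁻ ω in (accumulate E j)ᶜ, Z (j + 1) ω ∂μ ≤
      ∫⁻ ω in (accumulate E j)ᶜ, Z j ω ∂μ) :
    μ (⋃ j, E j) ≤ ∫⁻ ω, Z 0 ω ∂μ := by
  rw [measure_iUnion_eq_iSup_accumulate]
  exact iSup_le fun n =>
    le_self_add.trans (measure_accumulate_add_setLIntegral_le hE hZE hstep n)

end Ville

section Markov

variable {Ω X W : Type*} {m : MeasurableSpace Ω} [MeasurableSpace X] [MeasurableSpace W]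
  {μ : Measure Ω} {μW : Measure W} {f : X → W → X} {x : ℕ → Ω → X} {ℱ : Filtration ℕ m}

theorem measurable_iterNoise (hf : Measurable (Function.uncurry f)) (n : ℕ) :
    Measurable (fun p : X × (Fin n → W) => iterNoise f n p.1 p.2) := by
  induction n with
  | zero => exact measurable_fst
  | succ n ih =>
    exact hf.comp ((ih.comp (measurable_fst.prodMk (by fun_prop))).prodMk (by fun_prop))

theorem measurable_iterNoise_comp {Y : Type*} [MeasurableSpace Y]
    (hf : Measurable (Function.uncurry f)) {y : Y → X} (hy : Measurable y) (n : ℕ) :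
    Measurable fun p : Y × (Fin n → W) => iterNoise f n (y p.1) p.2 :=
  (measurable_iterNoise hf n).comp ((hy.comp measurable_fst).prodMk measurable_snd)

def IterNoiseMarkov (μ : Measure Ω) (μW : Measure W) (f : X → W → X) (x : ℕ → Ω → X)
    (ℱ : Filtration ℕ m) : Prop :=
  ∀ (t n : ℕ) (g : X → ℝ), Measurable g → (∃ C, ∀ y, |g y| ≤ C) →
    μ[(fun ω => g (x (t + n) ω))|ℱ t] =ᵐ[μ]
      fun ω => ∫ w, g (iterNoise f n (x t ω) w) ∂(Measure.pi fun _ : Fin n => μW)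

theorem integral_indicator_one_comp {α : Type*} [MeasurableSpace α] {ρ : Measure α}
    {y : α → X} (hy : Measurable y) {S : Set X} (hS : MeasurableSet S) :
    ∫ a, S.indicator (1 : X → ℝ) (y a) ∂ρ = ρ.real (y ⁻¹' S) :=
  integral_indicator_one (hy hS)

variable [IsFiniteMeasure μ] [IsFiniteMeasure μW]

theorem IterNoiseMarkov.map_restrict_eq (hM : IterNoiseMarkov μ μW f x ℱ)
    (hf : Measurable (Function.uncurry f)) (hx : ∀ t, Measurable[ℱ t] (x t)) {t n : ℕ}
    {G : Set Ω} (hG : MeasurableSet[ℱ t] G) :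
    (μ.restrict G).map (x (t + n)) =
      ((μ.restrict G).prod (Measure.pi fun _ : Fin n => μW)).map
        fun p => iterNoise f n (x t p.1) p.2 := by
  have hxm (s : ℕ) : Measurable (x s) := (hx s).mono (ℱ.le s) le_rfl
  have hGm : MeasurableSet G := ℱ.le t _ hG
  have hF := measurable_iterNoise_comp hf (hxm t) n
  ext S hS
  have hg : Measurable (S.indicator (1 : X → ℝ)) := measurable_const.indicator hS
  have hbd : ∃ C, ∀ y, |S.indicator (1 : X → ℝ) y| ≤ C :=
    ⟨1, fun y => by by_cases hy : y ∈ S <;> simp [hy]⟩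
  have hint : Integrable (fun ω => S.indicator (1 : X → ℝ) (x (t + n) ω)) μ :=
    (integrable_const (1 : ℝ)).indicator (hxm _ hS)
  refine (ENNReal.toReal_eq_toReal_iff' (measure_ne_top _ _) (measure_ne_top _ _)).mp ?_
  rw [Measure.map_apply (hxm _) hS, Measure.restrict_apply (hxm _ hS), Measure.map_apply hF hS,
    Measure.prod_apply (hF hS),
    ← integral_toReal (measurable_measure_prodMk_left (hF hS)).aemeasurable
      (ae_of_all _ fun _ => measure_lt_top _ _)]
  calc (μ (x (t + n) ⁻¹' S ∩ G)).toReal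
      = ∫ ω in G, S.indicator 1 (x (t + n) ω) ∂μ := by
        rw [integral_indicator_one_comp (hxm _) hS, measureReal_restrict_apply (hxm _ hS)]; rfl
    _ = ∫ ω in G, (μ[fun ω => S.indicator 1 (x (t + n) ω)|ℱ t]) ω ∂μ :=
        (setIntegral_condExp (ℱ.le t) hint hG).symm
    _ = ∫ ω in G, ∫ w, S.indicator 1 (iterNoise f n (x t ω) w)
          ∂(Measure.pi fun _ : Fin n => μW) ∂μ :=
        setIntegral_congr_ae hGm ((hM t n _ hg hbd).mono fun ω hω _ => hω)
    _ = _ := setIntegral_congr_fun hGm fun ω _ =>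
        integral_indicator_one_comp (hF.comp measurable_prodMk_left) hS

theorem IterNoiseMarkov.setLIntegral_comp_eq (hM : IterNoiseMarkov μ μW f x ℱ)
    (hf : Measurable (Function.uncurry f)) (hx : ∀ t, Measurable[ℱ t] (x t)) {t n : ℕ}
    {G : Set Ω} (hG : MeasurableSet[ℱ t] G) {g : X → ℝ≥0∞} (hg : Measurable g) :
    ∫⁻ ω in G, g (x (t + n) ω) ∂μ =
      ∫⁻ ω in G, ∫⁻ w, g (iterNoise f n (x t ω) w) ∂(Measure.pi fun _ : Fin n => μW) ∂μ := by
  have hF := measurable_iterNoise_comp hf ((hx t).mono (ℱ.le t) le_rfl) n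
  rw [← lintegral_map hg ((hx _).mono (ℱ.le _) le_rfl), hM.map_restrict_eq hf hx hG,
    lintegral_map hg hF,
    lintegral_prod (fun p => g (iterNoise f n (x t p.1) p.2)) (hg.comp hF).aemeasurable]

theorem IterNoiseMarkov.ae_restrict_ae_iterNoise_mem (hM : IterNoiseMarkov μ μW f x ℱ)
    (hf : Measurable (Function.uncurry f)) (hx : ∀ t, Measurable[ℱ t] (x t)) {t n : ℕ}
    {G : Set Ω} (hG : MeasurableSet[ℱ t] G) {P : Set X} (hP : MeasurableSet P)
    (hxP : ∀ ω ∈ G, x (t + n) ω ∈ P) :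
    ∀ᵐ ω ∂μ.restrict G, ∀ᵐ w ∂(Measure.pi fun _ : Fin n => μW), iterNoise f n (x t ω) w ∈ P := by
  have hF := measurable_iterNoise_comp hf ((hx t).mono (ℱ.le t) le_rfl) n
  have h := (ae_map_iff ((hx _).mono (ℱ.le _) le_rfl).aemeasurable hP).mpr
    (ae_restrict_of_forall_mem (μ := μ) (ℱ.le t _ hG) hxP)
  rw [hM.map_restrict_eq hf hx hG, ae_map_iff hF.aemeasurable hP] at h
  exact Measure.ae_ae_of_ae_prod h

theorem IterNoiseMarkov.setLIntegral_le_of_integral_le (hM : IterNoiseMarkov μ μW f x ℱ)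
    (hf : Measurable (Function.uncurry f)) (hx : ∀ t, Measurable[ℱ t] (x t)) {t n : ℕ}
    {G : Set Ω} (hG : MeasurableSet[ℱ t] G) {h : X → ℝ} (hh : Measurable h)
    (h0 : ∀ ω ∈ G, 0 ≤ h (x (t + n) ω)) (hint : IntegrableOn (fun ω => h (x (t + n) ω)) G μ)
    {c : Ω → ℝ}
    (hc : ∀ ω ∈ G, ∫ w, h (iterNoise f n (x t ω) w) ∂(Measure.pi fun _ : Fin n => μW) ≤ c ω) :
    ∫⁻ ω in G, ENNReal.ofReal (h (x (t + n) ω)) ∂μ ≤ ∫⁻ ω in G, ENNReal.ofReal (c ω) ∂μ := by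
  have hF := measurable_iterNoise_comp hf ((hx t).mono (ℱ.le t) le_rfl) n
  set Φ : Ω → ℝ≥0∞ := fun ω =>
    ∫⁻ w, ENNReal.ofReal (h (iterNoise f n (x t ω) w)) ∂(Measure.pi fun _ : Fin n => μW)
  have hΦ : ∫⁻ ω in G, ENNReal.ofReal (h (x (t + n) ω)) ∂μ = ∫⁻ ω in G, Φ ω ∂μ :=
    hM.setLIntegral_comp_eq hf hx hG hh.ennreal_ofReal
  have hnonneg :=
    hM.ae_restrict_ae_iterNoise_mem hf hx hG (measurableSet_le measurable_const hh) h0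
  -- `hc` bounds Bochner integrals, which are `0` off integrability: `hfin` excludes that case.
  have hfin : ∀ᵐ ω ∂μ.restrict G, Φ ω < ⊤ :=
    ae_lt_top (hh.comp hF).ennreal_ofReal.lintegral_prod_right'
      (hΦ ▸ hint.lintegral_lt_top.ne)
  rw [hΦ]
  refine lintegral_mono_ae ?_
  filter_upwards [hnonneg, hfin, ae_restrict_mem (ℱ.le t _ hG)] with ω hω hΦω hωG
  calc Φ ω
      = ENNReal.ofReal (∫ w, h (iterNoise f n (x t ω) w) ∂(Measure.pi fun _ : Fin n => μW)) := by
        rw [integral_eq_lintegral_of_nonneg_ae hω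
            (hh.comp (hF.comp measurable_prodMk_left)).aestronglyMeasurable,
          ENNReal.ofReal_toReal hΦω.ne]
    _ ≤ ENNReal.ofReal (c ω) := ENNReal.ofReal_le_ofReal (hc ω hωG)

theorem IterNoiseMarkov.measure_iUnion_preimage_le (hM : IterNoiseMarkov μ μW f x ℱ)
    (hf : Measurable (Function.uncurry f)) (hx : ∀ t, Measurable[ℱ t] (x t)) {k : ℕ}
    {S U : Set X} (hU : MeasurableSet U) {V : X → ℝ} (hV : Measurable V)
    (hV0 : ∀ y ∈ S, 0 ≤ V y) (hVU : ∀ y ∈ U, 1 ≤ V y)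
    (hVsuper : ∀ y ∈ S \ U,
      ∫ w, V (iterNoise f k y w) ∂(Measure.pi fun _ : Fin k => μW) ≤ V y)
    (hxS : ∀ t ω, x t ω ∈ S) (hint : ∀ t, Integrable (fun ω => V (x t ω)) μ) (i : ℕ) :
    μ (⋃ j, x (i + j * k) ⁻¹' U) ≤ ∫⁻ ω, ENNReal.ofReal (V (x i ω)) ∂μ := by
  have hE (j : ℕ) : MeasurableSet[ℱ (i + j * k)] (x (i + j * k) ⁻¹' U) := hx _ hU
  refine (measure_iUnion_le_lintegral_of_setLIntegral_le (fun j => ℱ.le _ _ (hE j))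
    (Z := fun j ω => ENNReal.ofReal (V (x (i + j * k) ω)))
    (fun j ω hω => ENNReal.one_le_ofReal.mpr (hVU _ hω)) fun j => ?_).trans_eq (by simp)
  have hG : MeasurableSet[ℱ (i + j * k)] (accumulate (fun j => x (i + j * k) ⁻¹' U) j)ᶜ :=
    (MeasurableSet.biUnion (to_countable _) fun j' hj' =>
      ℱ.mono (by gcongr; exact hj') _ (hE j')).compl
  have hstep := hM.setLIntegral_le_of_integral_le (n := k) hf hx hG hV
    (fun ω _ => hV0 _ (hxS _ ω)) (hint _).integrableOn fun ω hω =>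
      hVsuper _ ⟨hxS _ ω, fun hU => hω (mem_accumulate.mpr ⟨j, le_rfl, hU⟩)⟩
  rwa [add_one_mul, ← add_assoc]

end Markov

theorem stmt_8_general {Ω : Type*} {m : MeasurableSpace Ω} (μ : Measure Ω) [IsProbabilityMeasure μ]
    {X : Type*} [MeasurableSpace X] {W : Type*} [MeasurableSpace W]
    (μW : Measure W) [IsProbabilityMeasure μW]
    (Xs X0 Xu : Set X) (hXu : MeasurableSet Xu)
    (f : X → W → X) (hf : Measurable (Function.uncurry f))
    (k : ℕ) (hk : 1 ≤ k)
    (B : ℕ → X → ℝ) (hBmeas : ∀ i, Measurable (B i))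
    (lam : ℕ → ℝ) (hlam : ∀ i < k, 0 < lam i)
    -- multi-function k-BC conditions (Definition 3.3)
    (hB0 : ∀ i < k, ∀ x ∈ Xs, 0 ≤ B i x)
    (hBinit : ∀ x ∈ X0, B 0 x ≤ lam 0)
    (hBunsafe : ∀ i < k, ∀ x ∈ Xu, 1 ≤ B i x)
    (hBlam : ∀ i, 1 ≤ i → i < k → ∀ x0 ∈ X0,
      ∫ w, B i (iterNoise f i x0 w) ∂(Measure.pi fun _ : Fin i => μW) ≤ lam i)
    (hBsuper : ∀ i < k, ∀ x ∈ Xs \ Xu,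
      ∫ w, B i (iterNoise f k x w) ∂(Measure.pi fun _ : Fin k => μW) ≤ B i x)
    -- the solution process starting from x0 ∈ X0
    (x0 : X) (hx0 : x0 ∈ X0)
    (x : ℕ → Ω → X) (ℱ : Filtration ℕ m)
    (hadapted : ∀ t, Measurable[ℱ t] (x t))
    (hinit : ∀ ω, x 0 ω = x0)
    (hinv : ∀ t ω, x t ω ∈ Xs)
    (hintB : ∀ i t, Integrable (fun ω => B i (x t ω)) μ)
    (hMarkov : ∀ (t n : ℕ) (g : X → ℝ), Measurable g → (∃ C, ∀ y, |g y| ≤ C) →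
      μ[(fun ω => g (x (t + n) ω))|ℱ t] =ᵐ[μ]
        fun ω => ∫ w, g (iterNoise f n (x t ω) w) ∂(Measure.pi fun _ : Fin n => μW)) :
    ENNReal.ofReal (1 - ∑ i ∈ Finset.range k, lam i) ≤ μ {ω | ∀ t, x t ω ∉ Xu} := by
  have hM : IterNoiseMarkov μ μW f x ℱ := hMarkov
  have hstart : ∀ i < k, ∫⁻ ω, ENNReal.ofReal (B i (x i ω)) ∂μ ≤ ENNReal.ofReal (lam i) := by
    intro i hi
    rcases Nat.eq_zero_or_pos i with rfl | hi0
    · simpa [hinit] using ENNReal.ofReal_le_ofReal (hBinit x0 hx0)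
    · simpa [hinit] using hM.setLIntegral_le_of_integral_le (t := 0) (n := i) hf hadapted
        MeasurableSet.univ (hBmeas i) (fun ω _ => hB0 i hi _ (hinv _ ω)) (hintB i _).integrableOn
        (c := fun _ => lam i) fun ω _ => by simpa [hinit] using hBlam i hi0 hi x0 hx0
  refine ofReal_one_sub_sum_le_measure
    (fun i hi => (hlam i (Finset.mem_range.mp hi)).le) ?_
  calc μ {ω | ∀ t, x t ω ∉ Xu}ᶜ
      = μ (⋃ t, x t ⁻¹' Xu) := by congr 1; ext ω; simp
    _ ≤ μ (⋃ i ∈ Finset.range k, ⋃ j, x (i + j * k) ⁻¹' Xu) :=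
        measure_mono (iUnion_subset_biUnion_range_add_mul hk _)
    _ ≤ ∑ i ∈ Finset.range k, μ (⋃ j, x (i + j * k) ⁻¹' Xu) := measure_biUnion_finset_le _ _
    _ ≤ ∑ i ∈ Finset.range k, ENNReal.ofReal (lam i) := Finset.sum_le_sum fun i hi =>
        have hi := Finset.mem_range.mp hi
        (hM.measure_iUnion_preimage_le hf hadapted hXu (hBmeas i) (hB0 i hi) (hBunsafe i hi)
          (hBsuper i hi) hinv (hintB i) i).trans (hstart i hi)

/-- Theorem 3.4: a multi-function `k`-inductive barrier certificate `B₀,…,B_{k-1}` implies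
safety with probability at least `1 - ∑_{i=0}^{k-1} λ_i`. -/
theorem stmt_8 {Ω : Type*} {m : MeasurableSpace Ω} (μ : Measure Ω) [IsProbabilityMeasure μ]
    {X : Type*} [MeasurableSpace X] {W : Type*} [MeasurableSpace W]
    (μW : Measure W) [IsProbabilityMeasure μW]
    (Xs X0 Xu : Set X) (hX0sub : X0 ⊆ Xs) (hXusub : Xu ⊆ Xs) (hXu : MeasurableSet Xu)
    (f : X → W → X) (hf : Measurable (Function.uncurry f))
    (k : ℕ) (hk : 1 ≤ k)
    (B : ℕ → X → ℝ) (hBmeas : ∀ i, Measurable (B i))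
    (lam : ℕ → ℝ) (hlam : ∀ i < k, 0 < lam i)
    -- multi-function k-BC conditions (Definition 3.3)
    (hB0 : ∀ i < k, ∀ x ∈ Xs, 0 ≤ B i x)
    (hBinit : ∀ x ∈ X0, B 0 x ≤ lam 0)
    (hBunsafe : ∀ i < k, ∀ x ∈ Xu, 1 ≤ B i x)
    (hBlam : ∀ i, 1 ≤ i → i < k → ∀ x0 ∈ X0,
      ∫ w, B i (iterNoise f i x0 w) ∂(Measure.pi fun _ : Fin i => μW) ≤ lam i)
    (hBsuper : ∀ i < k, ∀ x ∈ Xs \ Xu,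
      ∫ w, B i (iterNoise f k x w) ∂(Measure.pi fun _ : Fin k => μW) ≤ B i x)
    -- the solution process starting from x0 ∈ X0
    (x0 : X) (hx0 : x0 ∈ X0)
    (x : ℕ → Ω → X) (ℱ : Filtration ℕ m)
    (hadapted : ∀ t, Measurable[ℱ t] (x t))
    (hmeasx : ∀ t, Measurable (x t))
    (hinit : ∀ ω, x 0 ω = x0)
    (hinv : ∀ t ω, x t ω ∈ Xs)
    (hintB : ∀ i t, Integrable (fun ω => B i (x t ω)) μ)
    (hMarkov : ∀ (t n : ℕ) (g : X → ℝ), Measurable g → (∃ C, ∀ y, |g y| ≤ C) →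
      μ[(fun ω => g (x (t + n) ω))|ℱ t] =ᵐ[μ]
        fun ω => ∫ w, g (iterNoise f n (x t ω) w) ∂(Measure.pi fun _ : Fin n => μW)) :
    ENNReal.ofReal (1 - ∑ i ∈ Finset.range k, lam i) ≤ μ {ω | ∀ t, x t ω ∉ Xu} :=
  stmt_8_general μ μW Xs X0 Xu hXu f hf k hk B hBmeas lam hlam hB0 hBinit hBunsafe hBlam hBsuper x0
    hx0 x ℱ hadapted hinit hinv hintB hMarkov
end

section
/- Under the hypotheses of the k-IBC v1 definition, for each 0 ≤ i < k, E[B_ℓ(x(ℓ + i))] ≤ γ ∏_{j=0}^{ℓ−1} α_j + i·c, where (x(t)) is the solution process with E[B₀(x(0))] ≤ γ, the interpolation conditions E[B_{j+1}(f(x,w))|x] ≤ α_j B_j(x) hold for j < ℓ, and the c-martingale condition E[B_ℓ(f(x,w))|x] ≤ B_ℓ(x) + c holds at each step. -/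
open MeasureTheory Filter

private lemma iSup_min_natCast (A : ENNReal) : ⨆ n : ℕ, min A (n : ENNReal) = A := by
  apply le_antisymm (iSup_le fun n => min_le_left _ _)
  rcases eq_or_ne A ⊤ with h | h
  · subst h
    have heq : ⨆ n : ℕ, min (⊤ : ENNReal) (n : ENNReal) = ⨆ n : ℕ, (n : ENNReal) := by
      simp
    rw [heq, top_le_iff, iSup_eq_top]
    intro b hb
    exact ENNReal.exists_nat_gt hb.ne
  · obtain ⟨n, hn⟩ := ENNReal.exists_nat_gt h
    exact le_iSup_of_le n (le_min le_rfl hn.le)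

private lemma integrable_of_bounded {α : Type*} {m : MeasurableSpace α} {ν : Measure α}
    [IsFiniteMeasure ν] {f : α → ℝ} (hf : AEStronglyMeasurable f ν) (C : ℝ)
    (h : ∀ a, |f a| ≤ C) : Integrable f ν :=
  (integrable_const C).mono' hf (Filter.Eventually.of_forall fun a => by
    simpa [Real.norm_eq_abs] using h a)

/-- Key transfer lemma: if the Markov property holds for bounded measurable test functions,
then `E[g(x(t+1))] ≤ E[h(x t)]` whenever `∫ g(f y w) dμW ≤ h y` on the invariant set. -/
private lemma markov_mono {Ω : Type*} {m : MeasurableSpace Ω} (μ : Measure Ω)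
    [IsProbabilityMeasure μ]
    {X : Type*} [MeasurableSpace X] {W : Type*} [MeasurableSpace W]
    (μW : Measure W) [IsProbabilityMeasure μW]
    (S : Set X) (f : X → W → X) (hf : Measurable (Function.uncurry f))
    (x : ℕ → Ω → X) (hmeasx : ∀ t, Measurable (x t))
    (hinv : ∀ t ω, x t ω ∈ S)
    (hMarkov : ∀ (t : ℕ) (g : X → ℝ), Measurable g → (∃ C, ∀ y, |g y| ≤ C) →
      ∫ ω, g (x (t + 1) ω) ∂μ = ∫ ω, ∫ w, g (f (x t ω) w) ∂μW ∂μ)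
    (t : ℕ) (g h : X → ℝ) (hg : Measurable g) (_hh : Measurable h)
    (hgint : Integrable (fun ω => g (x (t + 1) ω)) μ)
    (hhint : Integrable (fun ω => h (x t ω)) μ)
    (hle : ∀ y ∈ S, ∫ w, g (f y w) ∂μW ≤ h y) :
    ∫ ω, g (x (t + 1) ω) ∂μ ≤ ∫ ω, h (x t ω) ∂μ := by
  have hgf : Measurable fun p : X × W => g (f p.1 p.2) := hg.comp hf
  -- the ENNReal valued "absolute kernel integral"
  set F : X → ENNReal := fun y => ∫⁻ w, ENNReal.ofReal |g (f y w)| ∂μW with hF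
  have hFmeas : Measurable F :=
    Measurable.lintegral_prod_right' (ENNReal.measurable_ofReal.comp hgf.abs)
  -- truncations
  set φ : ℕ → X → ℝ := fun n y => min |g y| n with hφ
  have hφmeas : ∀ n, Measurable (φ n) := fun n => hg.abs.min measurable_const
  have hφnonneg : ∀ n y, 0 ≤ φ n y := fun n y => le_min (abs_nonneg _) (Nat.cast_nonneg n)
  have hφbd : ∀ n y, |φ n y| ≤ (n : ℝ) := fun n y => by
    rw [abs_of_nonneg (hφnonneg n y)]; exact min_le_right _ _
  -- Claim A : lintegral identity for |g|
  have claimA : ∫⁻ ω, F (x t ω) ∂μ = ∫⁻ ω, ENNReal.ofReal |g (x (t + 1) ω)| ∂μ := by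
    have hmono : Monotone fun n : ℕ => fun y => ENNReal.ofReal (φ n y) := by
      intro a b hab y
      exact ENNReal.ofReal_le_ofReal (min_le_min le_rfl (by exact_mod_cast hab))
    have hsup : ∀ y, (⨆ n : ℕ, ENNReal.ofReal (φ n y)) = ENNReal.ofReal |g y| := by
      intro y
      have : ∀ n : ℕ, ENNReal.ofReal (φ n y)
          = min (ENNReal.ofReal |g y|) (n : ENNReal) := by
        intro n
        show ENNReal.ofReal (min |g y| (n : ℝ)) = _
        rw [Monotone.map_min (fun _ _ h => ENNReal.ofReal_le_ofReal h)]
        congr 1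
        exact ENNReal.ofReal_natCast n
      simp_rw [this]
      exact iSup_min_natCast _
    -- per-n identity via hMarkov
    have hn : ∀ n : ℕ, ∫⁻ ω, ENNReal.ofReal (φ n (x (t + 1) ω)) ∂μ
        = ∫⁻ ω, ∫⁻ w, ENNReal.ofReal (φ n (f (x t ω) w)) ∂μW ∂μ := by
      intro n
      have hint1 : Integrable (fun ω => φ n (x (t + 1) ω)) μ :=
        integrable_of_bounded ((hφmeas n).comp (hmeasx _)).aestronglyMeasurable _
          (fun ω => hφbd n _)
      have hinner_int : ∀ y, Integrable (fun w => φ n (f y w)) μW := fun y =>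
        integrable_of_bounded (((hφmeas n).comp (hf.of_uncurry_left)).aestronglyMeasurable) _
          (fun w => hφbd n _)
      have hinner_bd : ∀ y, |∫ w, φ n (f y w) ∂μW| ≤ (n : ℝ) := by
        intro y
        have habs : |∫ w, φ n (f y w) ∂μW| ≤ ∫ w, |φ n (f y w)| ∂μW := by
          simpa [Real.norm_eq_abs] using
            norm_integral_le_integral_norm (μ := μW) fun w => φ n (f y w)
        have hle2 : ∫ w, |φ n (f y w)| ∂μW ≤ ∫ w, (n : ℝ) ∂μW :=
          integral_mono (hinner_int y).abs (integrable_const _) (fun w => hφbd n _)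
        have : ∫ w, (n : ℝ) ∂μW = (n : ℝ) := by simp
        linarith
      have houter_meas : StronglyMeasurable fun y => ∫ w, φ n (f y w) ∂μW :=
        StronglyMeasurable.integral_prod_right'
          (f := fun p : X × W => φ n (f p.1 p.2)) ((hφmeas n).comp hf).stronglyMeasurable
      have houter_int : Integrable (fun ω => ∫ w, φ n (f (x t ω) w) ∂μW) μ :=
        integrable_of_bounded
          ((houter_meas.comp_measurable (hmeasx t)).aestronglyMeasurable) _
          (fun ω => hinner_bd _)
      calc ∫⁻ ω, ENNReal.ofReal (φ n (x (t + 1) ω)) ∂μ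
          = ENNReal.ofReal (∫ ω, φ n (x (t + 1) ω) ∂μ) :=
            (ofReal_integral_eq_lintegral_ofReal hint1
              (Filter.Eventually.of_forall fun ω => hφnonneg n _)).symm
        _ = ENNReal.ofReal (∫ ω, ∫ w, φ n (f (x t ω) w) ∂μW ∂μ) := by
            rw [hMarkov t (φ n) (hφmeas n) ⟨n, fun y => hφbd n y⟩]
        _ = ∫⁻ ω, ENNReal.ofReal (∫ w, φ n (f (x t ω) w) ∂μW) ∂μ :=
            ofReal_integral_eq_lintegral_ofReal houter_int
              (Filter.Eventually.of_forall fun ω => integral_nonneg fun w => hφnonneg n _)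
        _ = ∫⁻ ω, ∫⁻ w, ENNReal.ofReal (φ n (f (x t ω) w)) ∂μW ∂μ := by
            congr 1
            ext ω
            exact ofReal_integral_eq_lintegral_ofReal (hinner_int _)
              (Filter.Eventually.of_forall fun w => hφnonneg n _)
    -- take suprema
    have lhs : ∫⁻ ω, ENNReal.ofReal |g (x (t + 1) ω)| ∂μ
        = ⨆ n : ℕ, ∫⁻ ω, ENNReal.ofReal (φ n (x (t + 1) ω)) ∂μ := by
      rw [← lintegral_iSup (f := fun n ω => ENNReal.ofReal (φ n (x (t + 1) ω)))
        (fun n => ((hφmeas n).comp (hmeasx _)).ennreal_ofReal)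
        (fun a b hab ω => hmono hab _)]
      simp_rw [hsup]
    have rhs : ∫⁻ ω, F (x t ω) ∂μ
        = ⨆ n : ℕ, ∫⁻ ω, ∫⁻ w, ENNReal.ofReal (φ n (f (x t ω) w)) ∂μW ∂μ := by
      have hinner : ∀ y, F y = ⨆ n : ℕ, ∫⁻ w, ENNReal.ofReal (φ n (f y w)) ∂μW := by
        intro y
        show ∫⁻ w, ENNReal.ofReal |g (f y w)| ∂μW = _
        rw [← lintegral_iSup (f := fun n w => ENNReal.ofReal (φ n (f y w)))
          (fun n => ((hφmeas n).comp (hf.of_uncurry_left)).ennreal_ofReal)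
          (fun a b hab w => hmono hab _)]
        simp_rw [hsup]
      simp_rw [hinner]
      rw [lintegral_iSup]
      · intro n
        exact (Measurable.lintegral_prod_right'
          (ENNReal.measurable_ofReal.comp ((hφmeas n).comp hf))).comp (hmeasx t)
      · intro a b hab ω
        exact lintegral_mono fun w => hmono hab _
    rw [lhs, rhs]
    exact iSup_congr fun n => (hn n).symm
  have hAfin : ∫⁻ ω, F (x t ω) ∂μ < ⊤ := by
    rw [claimA]
    have := (hasFiniteIntegral_iff_norm _).mp hgint.2
    simpa [Real.norm_eq_abs] using this
  have haefin : ∀ᵐ ω ∂μ, F (x t ω) < ⊤ :=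
    ae_lt_top (hFmeas.comp (hmeasx t)) hAfin.ne
  have haeint : ∀ᵐ ω ∂μ, Integrable (fun w => g (f (x t ω) w)) μW := by
    filter_upwards [haefin] with ω hω
    refine ⟨(hg.comp (hf.of_uncurry_left)).aestronglyMeasurable, ?_⟩
    rw [hasFiniteIntegral_iff_norm]
    simpa [Real.norm_eq_abs] using hω
  -- bound function (F (x t ·)).toReal
  have hbound_int : Integrable (fun ω => (F (x t ω)).toReal) μ :=
    integrable_toReal_of_lintegral_ne_top ((hFmeas.comp (hmeasx t)).aemeasurable) hAfin.ne
  -- two-sided truncations of g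
  set ψ : ℕ → X → ℝ := fun n y => max (min (g y) n) (-(n : ℝ)) with hψ
  have hψmeas : ∀ n, Measurable (ψ n) := fun n =>
    (hg.min measurable_const).max measurable_const
  have hψabs : ∀ n y, |ψ n y| ≤ |g y| := by
    intro n y
    rw [abs_le]
    constructor
    · refine le_max_of_le_left (le_min ?_ ?_)
      · exact neg_abs_le _
      · exact le_trans (neg_nonpos.mpr (abs_nonneg _)) (Nat.cast_nonneg n)
    · refine max_le (le_trans (min_le_left _ _) (le_abs_self _)) ?_
      exact le_trans (neg_nonpos.mpr (Nat.cast_nonneg n)) (abs_nonneg _)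
  have hψbd : ∀ n y, |ψ n y| ≤ (n : ℝ) := by
    intro n y
    rw [abs_le]
    exact ⟨le_max_right _ _, max_le (min_le_right _ _)
      (le_trans (neg_nonpos.mpr (Nat.cast_nonneg n)) (Nat.cast_nonneg n))⟩
  have hψtendsto : ∀ y, Tendsto (fun n => ψ n y) atTop (nhds (g y)) := by
    intro y
    obtain ⟨N, hN⟩ := exists_nat_ge |g y|
    apply tendsto_const_nhds.congr'
    filter_upwards [eventually_ge_atTop N] with n hn
    have h1 : |g y| ≤ (n : ℝ) := hN.trans (by exact_mod_cast hn)
    rw [hψ]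
    simp only []
    rw [min_eq_left ((le_abs_self _).trans h1),
      max_eq_left (le_trans (neg_le_neg h1) (neg_abs_le _))]
  have hψint : ∀ n y, Integrable (fun w => ψ n (f y w)) μW := fun n y =>
    integrable_of_bounded (((hψmeas n).comp (hf.of_uncurry_left)).aestronglyMeasurable) _
      (fun w => hψbd n _)
  -- Claim B : exchange identity for g itself
  have claimB : ∫ ω, g (x (t + 1) ω) ∂μ = ∫ ω, ∫ w, g (f (x t ω) w) ∂μW ∂μ := by
    have T1 : Tendsto (fun n => ∫ ω, ψ n (x (t + 1) ω) ∂μ) atTop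
        (nhds (∫ ω, g (x (t + 1) ω) ∂μ)) := by
      apply tendsto_integral_of_dominated_convergence (fun ω => |g (x (t + 1) ω)|)
        (fun n => ((hψmeas n).comp (hmeasx _)).aestronglyMeasurable) hgint.abs
      · intro n
        exact Filter.Eventually.of_forall fun ω => by
          simpa [Real.norm_eq_abs] using hψabs n (x (t + 1) ω)
      · exact Filter.Eventually.of_forall fun ω => hψtendsto _
    have T2 : Tendsto (fun n => ∫ ω, ∫ w, ψ n (f (x t ω) w) ∂μW ∂μ) atTop
        (nhds (∫ ω, ∫ w, g (f (x t ω) w) ∂μW ∂μ)) := by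
      apply tendsto_integral_of_dominated_convergence (fun ω => (F (x t ω)).toReal)
      · intro n
        exact ((StronglyMeasurable.integral_prod_right'
          (f := fun p : X × W => ψ n (f p.1 p.2))
          ((hψmeas n).comp hf).stronglyMeasurable).comp_measurable (hmeasx t)).aestronglyMeasurable
      · exact hbound_int
      · intro n
        filter_upwards [haefin] with ω hω
        calc ‖∫ w, ψ n (f (x t ω) w) ∂μW‖
            ≤ (∫⁻ w, ENNReal.ofReal ‖ψ n (f (x t ω) w)‖ ∂μW).toReal :=
              norm_integral_le_lintegral_norm _
          _ ≤ (F (x t ω)).toReal := by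
              apply ENNReal.toReal_mono hω.ne
              apply lintegral_mono
              intro w
              exact ENNReal.ofReal_le_ofReal (by
                simpa [Real.norm_eq_abs] using hψabs n (f (x t ω) w))
      · filter_upwards [haeint] with ω hω
        apply tendsto_integral_of_dominated_convergence (fun w => |g (f (x t ω) w)|)
          (fun n => (hψint n _).1) hω.abs
        · intro n
          exact Filter.Eventually.of_forall fun w => by
            simpa [Real.norm_eq_abs] using hψabs n _
        · exact Filter.Eventually.of_forall fun w => hψtendsto _
    have T1' : Tendsto (fun n => ∫ ω, ψ n (x (t + 1) ω) ∂μ) atTop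
        (nhds (∫ ω, ∫ w, g (f (x t ω) w) ∂μW ∂μ)) := by
      apply T2.congr
      intro n
      exact (hMarkov t (ψ n) (hψmeas n) ⟨n, fun y => hψbd n y⟩).symm
    exact tendsto_nhds_unique T1 T1'
  -- integrability of the inner-integral function
  have claimC : Integrable (fun ω => ∫ w, g (f (x t ω) w) ∂μW) μ := by
    apply hbound_int.mono'
    · exact ((StronglyMeasurable.integral_prod_right'
        (f := fun p : X × W => g (f p.1 p.2))
        hgf.stronglyMeasurable).comp_measurable (hmeasx t)).aestronglyMeasurable
    · filter_upwards [haefin] with ω hω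
      calc ‖∫ w, g (f (x t ω) w) ∂μW‖
          ≤ (∫⁻ w, ENNReal.ofReal ‖g (f (x t ω) w)‖ ∂μW).toReal :=
            norm_integral_le_lintegral_norm _
        _ = (F (x t ω)).toReal := by simp [hF, Real.norm_eq_abs]
  rw [claimB]
  exact integral_mono claimC hhint fun ω => hle _ (hinv t ω)

/-- The key expectation estimate in the proof of the k-IBC v1 safety theorem:
under the interpolation conditions for the first `ℓ` steps and the `c`-martingale condition for
`B_ℓ` at each step, `E[B_ℓ(x(ℓ+i))] ≤ γ ∏_{j<ℓ} α_j + i·c` for each `0 ≤ i < k`. -/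
theorem stmt_12 {Ω : Type*} {m : MeasurableSpace Ω} (μ : Measure Ω) [IsProbabilityMeasure μ]
    {X : Type*} [MeasurableSpace X] {W : Type*} [MeasurableSpace W]
    (μW : Measure W) [IsProbabilityMeasure μW]
    (Xs Xu : Set X) (f : X → W → X) (hf : Measurable (Function.uncurry f))
    (ℓ k : ℕ) (hk : 1 ≤ k)
    (B : ℕ → X → ℝ) (hBmeas : ∀ i, Measurable (B i))
    (α : ℕ → ℝ) (hα : ∀ j < ℓ, 0 < α j)
    (γ c : ℝ) (hγ : 0 ≤ γ) (hc : 0 ≤ c)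
    -- the solution process, evolving outside Xu (stopped-process convention)
    (x : ℕ → Ω → X) (hmeasx : ∀ t, Measurable (x t))
    (hinv : ∀ t ω, x t ω ∈ Xs \ Xu)
    (hintB : ∀ i t, Integrable (fun ω => B i (x t ω)) μ)
    -- law of total expectation / Markov step for the solution process
    (hMarkov : ∀ (t : ℕ) (g : X → ℝ), Measurable g → (∃ C, ∀ y, |g y| ≤ C) →
      ∫ ω, g (x (t + 1) ω) ∂μ = ∫ ω, ∫ w, g (f (x t ω) w) ∂μW ∂μ)
    (hinit : ∫ ω, B 0 (x 0 ω) ∂μ ≤ γ)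
    -- interpolation conditions for the first ℓ steps
    (hstep : ∀ j < ℓ, ∀ y ∈ Xs \ Xu, ∫ w, B (j + 1) (f y w) ∂μW ≤ α j * B j y)
    -- c-martingale condition at each step
    (hcmart : ∀ y ∈ Xs \ Xu, ∫ w, B ℓ (f y w) ∂μW ≤ B ℓ y + c) :
    ∀ i < k, ∫ ω, B ℓ (x (ℓ + i) ω) ∂μ ≤ γ * ∏ j ∈ Finset.range ℓ, α j + (i : ℝ) * c := by
  have key := markov_mono μ μW (Xs \ Xu) f hf x hmeasx hinv hMarkov
  -- Phase 1: interpolation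
  have P : ∀ j, j ≤ ℓ → ∫ ω, B j (x j ω) ∂μ ≤ γ * ∏ i ∈ Finset.range j, α i := by
    intro j
    induction j with
    | zero => intro _; simpa using hinit
    | succ j ih =>
      intro hj
      have hjℓ : j < ℓ := hj
      have h1 : ∫ ω, B (j + 1) (x (j + 1) ω) ∂μ ≤ ∫ ω, α j * B j (x j ω) ∂μ :=
        key j (B (j + 1)) (fun y => α j * B j y) (hBmeas _)
          ((hBmeas j).const_mul _) (hintB _ _) ((hintB j j).const_mul _)
          (fun y hy => hstep j hjℓ y hy)
      have h2 : ∫ ω, α j * B j (x j ω) ∂μ = α j * ∫ ω, B j (x j ω) ∂μ :=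
        integral_const_mul _ _
      have h3 := mul_le_mul_of_nonneg_left (ih hjℓ.le) (hα j hjℓ).le
      rw [Finset.prod_range_succ]
      calc ∫ ω, B (j + 1) (x (j + 1) ω) ∂μ ≤ α j * ∫ ω, B j (x j ω) ∂μ := by
            rw [← h2]; exact h1
        _ ≤ α j * (γ * ∏ i ∈ Finset.range j, α i) := h3
        _ = γ * ((∏ i ∈ Finset.range j, α i) * α j) := by ring
  -- Phase 2: c-martingale steps
  have Q : ∀ i : ℕ, ∫ ω, B ℓ (x (ℓ + i) ω) ∂μ
      ≤ γ * ∏ j ∈ Finset.range ℓ, α j + (i : ℝ) * c := by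
    intro i
    induction i with
    | zero => simpa using P ℓ le_rfl
    | succ i ih =>
      have h1 : ∫ ω, B ℓ (x (ℓ + i + 1) ω) ∂μ ≤ ∫ ω, (B ℓ (x (ℓ + i) ω) + c) ∂μ :=
        key (ℓ + i) (B ℓ) (fun y => B ℓ y + c) (hBmeas _)
          ((hBmeas ℓ).add measurable_const) (hintB _ _)
          ((hintB ℓ (ℓ + i)).add (integrable_const c)) hcmart
      have h2 : ∫ ω, (B ℓ (x (ℓ + i) ω) + c) ∂μ = (∫ ω, B ℓ (x (ℓ + i) ω) ∂μ) + c := by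
        rw [integral_add (hintB ℓ (ℓ + i)) (integrable_const c)]
        simp
      have : ℓ + (i + 1) = ℓ + i + 1 := by ring
      rw [this]
      calc ∫ ω, B ℓ (x (ℓ + i + 1) ω) ∂μ
          ≤ (∫ ω, B ℓ (x (ℓ + i) ω) ∂μ) + c := by rw [← h2]; exact h1
        _ ≤ γ * ∏ j ∈ Finset.range ℓ, α j + (i : ℝ) * c + c := by linarith
        _ = γ * ∏ j ∈ Finset.range ℓ, α j + ((i : ℕ) + 1 : ℝ) * c := by ring
        _ = γ * ∏ j ∈ Finset.range ℓ, α j + ((i + 1 : ℕ) : ℝ) * c := by push_cast; ring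
  intro i _
  exact Q i
end

section
/- Let (x(t))_{t∈ℕ} be a stochastic process and let B₀, ..., B_{k−1}: X → ℝ be nonnegative functions each satisfying the k-step supermartingale property E[B_i(x(t+k)) | x(t)] ≤ B_i(x(t)) along the process (outside X_u). Then P{∃ t ∈ ℕ: writing t = i + jk with 0 ≤ i < k and j ∈ ℕ, B_i(x(t)) ≥ 1} ≤ ∑_{i=0}^{k−1} E[B_i(x(i))]. -/
/-!
Along each residue class `t = i + jk` the process `B_i(x(t))` is a nonnegative supermartingale
for the subsampled filtration `ℱ(i + jk)`, so by Ville's inequality it reaches `1` with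
probability at most `E[B_i(x(i))]`; a union bound over the `k` classes finishes.
Ville's inequality comes from optional stopping at the first time before a horizon `n` at which
the supermartingale reaches `1`, followed by `n → ∞`.
-/

open MeasureTheory

namespace MeasureTheory

variable {Ω : Type*} {m : MeasurableSpace Ω} {μ : Measure Ω}

def Filtration.comp {ι κ : Type*} [Preorder ι] [Preorder κ] (ℱ : Filtration ι m) (σ : κ → ι)
    (hσ : Monotone σ) : Filtration κ m where
  seq j := ℱ (σ j)
  mono' _ _ hab := ℱ.mono (hσ hab)
  le' j := ℱ.le (σ j)

section Supermartingale

variable [IsFiniteMeasure μ] {𝒢 : Filtration ℕ m} {f : ℕ → Ω → ℝ}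

theorem Supermartingale.integral_stoppedValue_le_integral_zero (hf : Supermartingale f 𝒢 μ)
    {τ : Ω → WithTop ℕ} (hτ : IsStoppingTime 𝒢 τ) {N : ℕ} (hbdd : ∀ ω, τ ω ≤ N) :
    ∫ ω, stoppedValue f τ ω ∂μ ≤ ∫ ω, f 0 ω ∂μ := by
  have := hf.neg.expected_stoppedValue_mono (isStoppingTime_const 𝒢 0) hτ
    (fun _ ↦ zero_le) hbdd
  rw [stoppedValue_const] at this
  change ∫ ω, -f 0 ω ∂μ ≤ ∫ ω, -stoppedValue f τ ω ∂μ at this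
  rwa [integral_neg, integral_neg, neg_le_neg_iff] at this

theorem Supermartingale.measureReal_exists_le_one_le (hf : Supermartingale f 𝒢 μ)
    (hnonneg : 0 ≤ f) (n : ℕ) :
    μ.real {ω | ∃ j ≤ n, 1 ≤ f j ω} ≤ ∫ ω, f 0 ω ∂μ := by
  set τ : Ω → WithTop ℕ := fun ω ↦ (hittingBtwn f (Set.Ici 1) 0 n ω : ℕ)
  have hτ : IsStoppingTime 𝒢 τ :=
    hf.stronglyAdapted.adapted.isStoppingTime_hittingBtwn measurableSet_Ici
  have hτ_le : ∀ ω, τ ω ≤ n := fun ω ↦ WithTop.coe_le_coe.2 (hittingBtwn_le ω)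
  have hsub : {ω | ∃ j ≤ n, 1 ≤ f j ω} ⊆ {ω | 1 ≤ stoppedValue f τ ω} :=
    fun ω ⟨j, hj, hj1⟩ ↦ stoppedValue_hittingBtwn_mem ⟨j, ⟨zero_le, hj⟩, hj1⟩
  calc μ.real {ω | ∃ j ≤ n, 1 ≤ f j ω}
      ≤ 1 * μ.real {ω | 1 ≤ stoppedValue f τ ω} := by
        rw [one_mul]; exact measureReal_mono hsub
    _ ≤ ∫ ω, stoppedValue f τ ω ∂μ :=
        mul_meas_ge_le_integral_of_nonneg (ae_of_all _ fun ω ↦ hnonneg _ ω)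
          (integrable_stoppedValue ℕ hτ hf.integrable hτ_le) 1
    _ ≤ ∫ ω, f 0 ω ∂μ := hf.integral_stoppedValue_le_integral_zero hτ hτ_le

theorem Supermartingale.measure_exists_one_le_le (hf : Supermartingale f 𝒢 μ)
    (hnonneg : 0 ≤ f) :
    μ {ω | ∃ j, 1 ≤ f j ω} ≤ ENNReal.ofReal (∫ ω, f 0 ω ∂μ) := by
  have hunion : {ω | ∃ j, 1 ≤ f j ω} = ⋃ n, {ω | ∃ j ≤ n, 1 ≤ f j ω} := by
    ext ω
    simp only [Set.mem_ofPred_eq, Set.mem_iUnion]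
    exact ⟨fun ⟨j, hj⟩ ↦ ⟨j, j, le_rfl, hj⟩, fun ⟨_, j, _, hj⟩ ↦ ⟨j, hj⟩⟩
  have hmono : Monotone fun n ↦ {ω | ∃ j ≤ n, 1 ≤ f j ω} :=
    fun _ _ hab _ ⟨j, hj, h1⟩ ↦ ⟨j, hj.trans hab, h1⟩
  rw [hunion, hmono.directed_le.measure_iUnion]
  refine iSup_le fun n ↦ ?_
  rw [← ENNReal.ofReal_toReal (measure_ne_top μ _)]
  exact ENNReal.ofReal_le_ofReal (hf.measureReal_exists_le_one_le hnonneg n)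

end Supermartingale

theorem supermartingale_comp_add_mul [IsFiniteMeasure μ] {ℱ : Filtration ℕ m} {f : ℕ → Ω → ℝ}
    (hadp : StronglyAdapted ℱ f) (hint : ∀ t, Integrable (f t) μ) {k : ℕ}
    (hf : ∀ t, μ[f (t + k) | ℱ t] ≤ᵐ[μ] f t) (i : ℕ) :
    Supermartingale (fun j ↦ f (i + j * k))
      (ℱ.comp (fun j ↦ i + j * k) fun _ _ h ↦ Nat.add_le_add_left (Nat.mul_le_mul_right k h) i)
      μ := by
  refine supermartingale_nat (fun j ↦ hadp _) (fun j ↦ hint _) fun j ↦ ?_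
  have hstep : i + (j + 1) * k = i + j * k + k := by ring
  rw [hstep]
  exact hf (i + j * k)

end MeasureTheory

theorem stmt_16_general {Ω : Type*} {m : MeasurableSpace Ω} (μ : Measure Ω) [IsProbabilityMeasure μ]
    {X : Type*} [MeasurableSpace X]
    (k : ℕ) (hk : 1 ≤ k)
    (B : ℕ → X → ℝ) (hBmeas : ∀ i < k, Measurable (B i))
    (hBnonneg : ∀ i < k, ∀ y, 0 ≤ B i y)
    (x : ℕ → Ω → X) (ℱ : Filtration ℕ m)
    (hadapted : ∀ t, Measurable[ℱ t] (x t))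
    (hintB : ∀ i < k, ∀ t, Integrable (fun ω => B i (x t ω)) μ)
    -- k-step supermartingale property of each B_i along the process
    (hsuper : ∀ i < k, ∀ t,
      μ[(fun ω => B i (x (t + k) ω))|ℱ t] ≤ᵐ[μ] fun ω => B i (x t ω)) :
    μ {ω | ∃ t : ℕ, 1 ≤ B (t % k) (x t ω)} ≤
      ENNReal.ofReal (∑ i ∈ Finset.range k, ∫ ω, B i (x i ω) ∂μ) := by
  have hresidue : ∀ i < k, μ {ω | ∃ j : ℕ, 1 ≤ B i (x (i + j * k) ω)} ≤
      ENNReal.ofReal (∫ ω, B i (x i ω) ∂μ) := fun i hi ↦ by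
    have hS := supermartingale_comp_add_mul (μ := μ) (f := fun t ω ↦ B i (x t ω))
      (fun t ↦ ((hBmeas i hi).comp (hadapted t)).stronglyMeasurable) (hintB i hi) (hsuper i hi) i
    simpa only [zero_mul, add_zero] using
      hS.measure_exists_one_le_le fun j ω ↦ hBnonneg i hi _
  have hcover : {ω | ∃ t : ℕ, 1 ≤ B (t % k) (x t ω)} ⊆
      ⋃ i ∈ Finset.range k, {ω | ∃ j : ℕ, 1 ≤ B i (x (i + j * k) ω)} := fun ω ⟨t, ht⟩ ↦
    Set.mem_biUnion (Finset.mem_range.2 (Nat.mod_lt t hk)) ⟨t / k, by rwa [Nat.mod_add_div']⟩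
  calc μ {ω | ∃ t : ℕ, 1 ≤ B (t % k) (x t ω)}
      ≤ ∑ i ∈ Finset.range k, μ {ω | ∃ j : ℕ, 1 ≤ B i (x (i + j * k) ω)} :=
        (measure_mono hcover).trans (measure_biUnion_finset_le _ _)
    _ ≤ ∑ i ∈ Finset.range k, ENNReal.ofReal (∫ ω, B i (x i ω) ∂μ) :=
        Finset.sum_le_sum fun i hi ↦ hresidue i (Finset.mem_range.1 hi)
    _ = ENNReal.ofReal (∑ i ∈ Finset.range k, ∫ ω, B i (x i ω) ∂μ) :=
        (ENNReal.ofReal_sum_of_nonneg fun i hi ↦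
          integral_nonneg fun ω ↦ hBnonneg i (Finset.mem_range.1 hi) _).symm

/-- The core probabilistic estimate behind the k-induction safety theorems: if each
nonnegative `B_i` (`0 ≤ i < k`) satisfies the `k`-step supermartingale property along the
process, then the probability that at some time `t = i + jk` the value `B_i(x(t))` reaches `1`
is at most `∑_{i=0}^{k-1} E[B_i(x(i))]` (Ville's inequality on each residue class plus
Boole's inequality). -/
theorem stmt_16 {Ω : Type*} {m : MeasurableSpace Ω} (μ : Measure Ω) [IsProbabilityMeasure μ]
    {X : Type*} [MeasurableSpace X]
    (k : ℕ) (hk : 1 ≤ k)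
    (B : ℕ → X → ℝ) (hBmeas : ∀ i < k, Measurable (B i))
    (hBnonneg : ∀ i < k, ∀ y, 0 ≤ B i y)
    (x : ℕ → Ω → X) (ℱ : Filtration ℕ m)
    (hadapted : ∀ t, Measurable[ℱ t] (x t))
    (hmeasx : ∀ t, Measurable (x t))
    (hintB : ∀ i < k, ∀ t, Integrable (fun ω => B i (x t ω)) μ)
    -- k-step supermartingale property of each B_i along the process
    (hsuper : ∀ i < k, ∀ t,
      μ[(fun ω => B i (x (t + k) ω))|ℱ t] ≤ᵐ[μ] fun ω => B i (x t ω)) :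
    μ {ω | ∃ t : ℕ, 1 ≤ B (t % k) (x t ω)} ≤
      ENNReal.ofReal (∑ i ∈ Finset.range k, ∫ ω, B i (x i ω) ∂μ) :=
  stmt_16_general μ k hk B hBmeas hBnonneg x ℱ hadapted hintB hsuper
end

section
/- Deterministic interpolation-inspired barrier certificate soundness: let f: X → X be a deterministic transition map and suppose B₀, ..., B_ℓ: X → ℝ satisfy B_i(x) ≥ 0 for all x ∈ X, B₀(x) ≤ γ for all x ∈ X₀, B_i(x) ≥ 1 for all x ∈ X_u, B_{i+1}(f(x)) ≤ α_i B_i(x) for all x ∈ X \ X_u and 0 ≤ i < ℓ, and B_ℓ(f(x)) ≤ B_ℓ(x) for all x ∈ X \ X_u, where γ ∏_{i=0}^{j−1} α_i < 1 for every 0 ≤ j ≤ ℓ. Then no trajectory x(0) ∈ X₀, x(t+1) = f(x(t)) ever enters X_u; moreover, for each 0 ≤ j < ℓ, B_j(x(j)) ≤ γ ∏_{i=0}^{j−1} α_i, and for all t ≥ ℓ, B_ℓ(x(t)) ≤ γ ∏_{i=0}^{ℓ−1} α_i. -/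
/-!
Let `S_j = {x ∈ Xs | B_j x ≤ γ ∏_{i<j} α_i}`. Since `γ ∏_{i<j} α_i < 1 ≤ B_j` on `X_u`, each `S_j`
with `j ≤ ℓ` misses `X_u`, so the step conditions apply on it: `f` maps `S_j` into `S_{j+1}` for
`j < ℓ` and `S_ℓ` into itself. By induction the trajectory satisfies `x t ∈ S_{min t ℓ}`.
-/

open Set Finset

namespace BarrierCertificate

variable {X : Type*} {Xs Xu : Set X} {f : X → X} {ℓ j : ℕ} {γ : ℝ} {α : ℕ → ℝ} {B : ℕ → X → ℝ}

def level (Xs : Set X) (B : ℕ → X → ℝ) (γ : ℝ) (α : ℕ → ℝ) (j : ℕ) : Set X :=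
  {y ∈ Xs | B j y ≤ γ * ∏ i ∈ range j, α i}

theorem disjoint_level_unsafe (hBunsafe : ∀ x ∈ Xu, 1 ≤ B j x)
    (hlt1 : γ * ∏ i ∈ range j, α i < 1) : Disjoint (level Xs B γ α j) Xu :=
  Set.disjoint_left.2 fun _ hy hu => (hlt1.trans_le (hBunsafe _ hu)).not_ge hy.2

theorem mapsTo_level_succ (hf : MapsTo f Xs Xs) (hα : 0 ≤ α j)
    (hBstep : ∀ x ∈ Xs \ Xu, B (j + 1) (f x) ≤ α j * B j x) :
    MapsTo f (level Xs B γ α j \ Xu) (level Xs B γ α (j + 1)) := by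
  rintro y ⟨⟨hy, hBy⟩, hyu⟩
  refine ⟨hf hy, ?_⟩
  calc B (j + 1) (f y) ≤ α j * B j y := hBstep y ⟨hy, hyu⟩
    _ ≤ α j * (γ * ∏ i ∈ range j, α i) := mul_le_mul_of_nonneg_left hBy hα
    _ = γ * ∏ i ∈ range (j + 1), α i := by rw [prod_range_succ]; ring

theorem mapsTo_level_self (hf : MapsTo f Xs Xs) (hBsuper : ∀ x ∈ Xs \ Xu, B j (f x) ≤ B j x) :
    MapsTo f (level Xs B γ α j \ Xu) (level Xs B γ α j) :=
  fun _ ⟨⟨hy, hBy⟩, hyu⟩ => ⟨hf hy, (hBsuper _ ⟨hy, hyu⟩).trans hBy⟩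

theorem mapsTo_level_min (hf : MapsTo f Xs Xs) (hα : ∀ i < ℓ, 0 ≤ α i)
    (hBunsafe : ∀ i ≤ ℓ, ∀ x ∈ Xu, 1 ≤ B i x)
    (hBstep : ∀ i < ℓ, ∀ x ∈ Xs \ Xu, B (i + 1) (f x) ≤ α i * B i x)
    (hBsuper : ∀ x ∈ Xs \ Xu, B ℓ (f x) ≤ B ℓ x)
    (hlt1 : ∀ j ≤ ℓ, γ * ∏ i ∈ range j, α i < 1) (t : ℕ) :
    MapsTo f (level Xs B γ α (min t ℓ)) (level Xs B γ α (min (t + 1) ℓ)) := by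
  have hsafe := disjoint_level_unsafe (Xs := Xs) (hBunsafe _ (min_le_right t ℓ))
    (hlt1 _ (min_le_right t ℓ))
  rw [← hsafe.sdiff_eq_left]
  rcases lt_or_ge t ℓ with ht | ht
  · rw [min_eq_left ht.le, min_eq_left ht]
    exact mapsTo_level_succ hf (hα t ht) (hBstep t ht)
  · rw [min_eq_right ht, min_eq_right (ht.trans t.le_succ)]
    exact mapsTo_level_self hf hBsuper

end BarrierCertificate

open BarrierCertificate in
theorem stmt_19_general {X : Type*} (Xs X0 Xu : Set X) (hX0sub : X0 ⊆ Xs)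
    (f : X → X) (hf : ∀ x ∈ Xs, f x ∈ Xs)
    (ℓ : ℕ) (γ : ℝ) (α : ℕ → ℝ) (hα : ∀ i < ℓ, 0 < α i)
    (B : ℕ → X → ℝ)
    (hBinit : ∀ x ∈ X0, B 0 x ≤ γ)
    (hBunsafe : ∀ i ≤ ℓ, ∀ x ∈ Xu, 1 ≤ B i x)
    (hBstep : ∀ i < ℓ, ∀ x ∈ Xs \ Xu, B (i + 1) (f x) ≤ α i * B i x)
    (hBsuper : ∀ x ∈ Xs \ Xu, B ℓ (f x) ≤ B ℓ x)
    (hlt1 : ∀ j ≤ ℓ, γ * ∏ i ∈ Finset.range j, α i < 1)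
    (x : ℕ → X) (hx0 : x 0 ∈ X0) (hstep : ∀ t, x (t + 1) = f (x t)) :
    (∀ t, x t ∉ Xu) ∧
    (∀ j < ℓ, B j (x j) ≤ γ * ∏ i ∈ Finset.range j, α i) ∧
    (∀ t, ℓ ≤ t → B ℓ (x t) ≤ γ * ∏ i ∈ Finset.range ℓ, α i) := by
  have hmem : ∀ t, x t ∈ level Xs B γ α (min t ℓ) := by
    intro t
    induction t with
    | zero => exact ⟨hX0sub hx0, by simpa using hBinit _ hx0⟩
    | succ t ih =>
      rw [hstep]
      exact mapsTo_level_min hf (fun i hi => (hα i hi).le) hBunsafe hBstep hBsuper hlt1 t ih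
  refine ⟨fun t => ?_, fun j hj => ?_, fun t ht => ?_⟩
  · exact Set.disjoint_left.1 (disjoint_level_unsafe (hBunsafe _ (min_le_right t ℓ))
      (hlt1 _ (min_le_right t ℓ))) (hmem t)
  · simpa only [min_eq_left hj.le] using (hmem j).2
  · simpa only [min_eq_right ht] using (hmem t).2

/-- Deterministic interpolation-inspired barrier certificate soundness: under the
deterministic IBC conditions with `γ ∏_{i<j} α_i < 1` for every `0 ≤ j ≤ ℓ`, no trajectory
starting in `X₀` ever enters `X_u`; moreover `B_j(x(j)) ≤ γ ∏_{i<j} α_i` for `0 ≤ j < ℓ` and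
`B_ℓ(x(t)) ≤ γ ∏_{i<ℓ} α_i` for all `t ≥ ℓ`. -/
theorem stmt_19 {X : Type*} (Xs X0 Xu : Set X) (hX0sub : X0 ⊆ Xs) (hXusub : Xu ⊆ Xs)
    (f : X → X) (hf : ∀ x ∈ Xs, f x ∈ Xs)
    (ℓ : ℕ) (γ : ℝ) (hγ : 0 ≤ γ) (α : ℕ → ℝ) (hα : ∀ i < ℓ, 0 < α i)
    (B : ℕ → X → ℝ)
    (hB0 : ∀ i ≤ ℓ, ∀ x ∈ Xs, 0 ≤ B i x)
    (hBinit : ∀ x ∈ X0, B 0 x ≤ γ)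
    (hBunsafe : ∀ i ≤ ℓ, ∀ x ∈ Xu, 1 ≤ B i x)
    (hBstep : ∀ i < ℓ, ∀ x ∈ Xs \ Xu, B (i + 1) (f x) ≤ α i * B i x)
    (hBsuper : ∀ x ∈ Xs \ Xu, B ℓ (f x) ≤ B ℓ x)
    (hlt1 : ∀ j ≤ ℓ, γ * ∏ i ∈ Finset.range j, α i < 1)
    (x : ℕ → X) (hx0 : x 0 ∈ X0) (hstep : ∀ t, x (t + 1) = f (x t)) :
    (∀ t, x t ∉ Xu) ∧
    (∀ j < ℓ, B j (x j) ≤ γ * ∏ i ∈ Finset.range j, α i) ∧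
    (∀ t, ℓ ≤ t → B ℓ (x t) ≤ γ * ∏ i ∈ Finset.range ℓ, α i) :=
  stmt_19_general Xs X0 Xu hX0sub f hf ℓ γ α hα B hBinit hBunsafe hBstep hBsuper hlt1 x hx0 hstep
end
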